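/- Every palindromic prefix of ψ(v) equals ψ(u) for some prefix u of v. -/

import Mathlib

/-! Induction on `v`. Write `w = ψ(v) x`, so that `ψ(vx) = w⁺`. A palindromic prefix `p` of `w⁺` that
is no longer than `ψ(v)` is a prefix of `ψ(v)` and the induction hypothesis applies. A longer one
has `w` as a prefix, and no palindrome with prefix `w` is shorter than `w⁺`; hence `p = w⁺ = ψ(vx)`. -/

def palClosure (w : List Bool) : List Bool :=
  let k := Nat.find (p := fun k => (w.drop k).reverse = w.drop k)
    ⟨w.length, by simp⟩
  w.take k ++ w.drop k ++ (w.take k).reverse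

def psi (v : List Bool) : List Bool := v.foldl (fun w x => palClosure (w ++ [x])) []

def E (v : List Bool) : List Bool := v.map (!·)

def mu (x : Bool) (w : List Bool) : List Bool := w.flatMap (fun y => if y = x then [x] else [x, y])

def muW : List Bool → List Bool → List Bool
  | [], w => w
  | x :: v, w => mu x (muW v w)

def vN (n : ℕ) : List Bool := (List.range n).map (fun i => decide (i % 2 = 1))

def fibF : ℕ → ℕ
  | 0 => 1
  | 1 => 1
  | n + 2 => fibF (n + 1) + fibF n

def HasPeriod (w : List Bool) (p : ℕ) : Prop :=
  0 < p ∧ ∀ i j (hi : i < w.length) (hj : j < w.length),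
    i % p = j % p → w.get ⟨i, hi⟩ = w.get ⟨j, hj⟩

noncomputable def minPeriod (w : List Bool) : ℕ := sInf {p | HasPeriod w p}

def dOp : List Bool → List Bool
  | x :: y :: u => y :: x :: u
  | w => w

def cOp (v : List Bool) : List Bool := (dOp v.reverse).reverse

def contAux : List ℕ → ℕ
  | [] => 1
  | [a] => a
  | a :: b :: t => a * contAux (b :: t) + contAux t

theorem List.reverse_drop_eq_of_reverse_append_eq {α : Type*} {w t : List α}
    (h : (w ++ t).reverse = w ++ t) (ht : t.length ≤ w.length) :
    (w.drop t.length).reverse = w.drop t.length := by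
  have htake : w.take t.length = t.reverse := by
    simpa [List.take_append_of_le_length ht] using (congrArg (List.take t.length) h).symm
  rw [← List.take_append_drop t.length w, htake] at h
  simpa using h

def palSuffixStart (w : List Bool) : ℕ :=
  Nat.find (p := fun k => (w.drop k).reverse = w.drop k) ⟨w.length, by simp⟩

lemma palSuffixStart_le_length (w : List Bool) : palSuffixStart w ≤ w.length :=
  Nat.find_le (by simp)

lemma reverse_drop_palSuffixStart (w : List Bool) :
    (w.drop (palSuffixStart w)).reverse = w.drop (palSuffixStart w) :=
  Nat.find_spec (⟨w.length, by simp⟩ : ∃ k, (w.drop k).reverse = w.drop k)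

lemma palClosure_eq (w : List Bool) :
    palClosure w = w ++ (w.take (palSuffixStart w)).reverse := by
  show w.take (palSuffixStart w) ++ w.drop (palSuffixStart w) ++
    (w.take (palSuffixStart w)).reverse = _
  rw [List.take_append_drop]

lemma prefix_palClosure (w : List Bool) : w <+: palClosure w := by
  rw [palClosure_eq]
  exact List.prefix_append _ _

lemma length_palClosure (w : List Bool) :
    (palClosure w).length = w.length + palSuffixStart w := by
  simp [palClosure_eq, palSuffixStart_le_length w]

lemma reverse_palClosure (w : List Bool) : (palClosure w).reverse = palClosure w := by
  have hrev : w.reverse = w.drop (palSuffixStart w) ++ (w.take (palSuffixStart w)).reverse := by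
    conv_lhs => rw [← List.take_append_drop (palSuffixStart w) w]
    rw [List.reverse_append, reverse_drop_palSuffixStart]
  rw [palClosure_eq, List.reverse_append, List.reverse_reverse, hrev,
    ← List.append_assoc, List.take_append_drop]

lemma length_palClosure_le {w q : List Bool} (hwq : w <+: q) (hq : q.reverse = q) :
    (palClosure w).length ≤ q.length := by
  obtain ⟨t, rfl⟩ := hwq
  rw [length_palClosure, List.length_append]
  by_cases ht : t.length ≤ w.length
  · have : palSuffixStart w ≤ t.length :=
      Nat.find_min' _ (List.reverse_drop_eq_of_reverse_append_eq hq ht)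
    omega
  · have := palSuffixStart_le_length w
    omega

lemma eq_palClosure_of_prefix {w p : List Bool} (hwp : w <+: p) (hp : p <+: palClosure w)
    (hpal : p.reverse = p) : p = palClosure w :=
  hp.eq_of_length (le_antisymm hp.length_le (length_palClosure_le hwp hpal))

lemma psi_append_singleton (v : List Bool) (x : Bool) :
    psi (v ++ [x]) = palClosure (psi v ++ [x]) := by
  simp [psi, List.foldl_append]

theorem stmt3 (v p : List Bool) (hp : p <+: psi v) (hpal : p.reverse = p) :
    ∃ u : List Bool, u <+: v ∧ psi u = p := by
  induction v using List.reverseRecOn generalizing p with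
  | nil =>
    refine ⟨[], List.prefix_rfl, ?_⟩
    simpa [psi, eq_comm] using hp
  | append_singleton v x ih =>
    rw [psi_append_singleton] at hp
    by_cases hshort : p.length ≤ (psi v).length
    · have hpsi : psi v <+: palClosure (psi v ++ [x]) :=
        (List.prefix_append _ _).trans (prefix_palClosure _)
      obtain ⟨u, huv, rfl⟩ := ih p (List.prefix_of_prefix_length_le hp hpsi hshort) hpal
      exact ⟨u, huv.trans (List.prefix_append _ _), rfl⟩
    · have hwp : psi v ++ [x] <+: p :=
        List.prefix_of_prefix_length_le (prefix_palClosure _) hp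
          (by simp only [List.length_append, List.length_singleton]; omega)
      rw [eq_palClosure_of_prefix hwp hp hpal, ← psi_append_singleton]
      exact ⟨v ++ [x], List.prefix_rfl, rfl⟩
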